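/- arXiv:1301.5051 — 2 statements merged into one kernel-verified Lean document; each statement's English description precedes it below -/
import Mathlib

section
/- If B is an invertible d×d rational matrix that is not an integer matrix, then the commutator subgroup [G,G] of the time-frequency group G = ⟨T_k, M_l : k ∈ ℤ^d, l ∈ Bℤ^d⟩ is a nontrivial finite cyclic group; in fact, letting m be the least common multiple of the denominators of the entries of B in lowest terms, [G,G] is contained in the group of m-th roots of unity. -/
noncomputable section

open Complex

/-- The real dot product on `Fin d → ℝ`. -/
def dotR {d : ℕ} (a b : Fin d → ℝ) : ℝ := ∑ i, a i * b i

/-- `e2pi t = exp (2 π i t)`. -/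
def e2pi (t : ℝ) : ℂ := Complex.exp (2 * Real.pi * Complex.I * t)

lemma e2pi_add (s t : ℝ) : e2pi (s + t) = e2pi s * e2pi t := by
  rw [e2pi, e2pi, e2pi, ← Complex.exp_add]
  congr 1
  push_cast
  ring

lemma e2pi_zero : e2pi 0 = 1 := by simp [e2pi]

lemma e2pi_neg_mul (t : ℝ) : e2pi (-t) * e2pi t = 1 := by
  rw [← e2pi_add, neg_add_cancel, e2pi_zero]

/-- Translation operator `T_k f (x) = f (x - k)`, as a bijection of functions. -/
def Tr {d : ℕ} (k : Fin d → ℝ) : Equiv.Perm ((Fin d → ℝ) → ℂ) where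
  toFun f := fun x => f (x - k)
  invFun f := fun x => f (x + k)
  left_inv f := by funext x; simp
  right_inv f := by funext x; simp

/-- Modulation operator `M_l f (x) = e^{2πi⟨l,x⟩} f (x)`. -/
def Mo {d : ℕ} (l : Fin d → ℝ) : Equiv.Perm ((Fin d → ℝ) → ℂ) where
  toFun f := fun x => e2pi (dotR l x) * f x
  invFun f := fun x => e2pi (-(dotR l x)) * f x
  left_inv f := by
    funext x; dsimp; rw [← mul_assoc, e2pi_neg_mul, one_mul]
  right_inv f := by
    funext x; dsimp
    rw [← mul_assoc, mul_comm (e2pi (dotR l x)), e2pi_neg_mul, one_mul]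

/-- Scalar operator: multiplication by the unimodular constant `e^{2πiθ}`. -/
def Sc {d : ℕ} (θ : ℝ) : Equiv.Perm ((Fin d → ℝ) → ℂ) where
  toFun f := fun x => e2pi θ * f x
  invFun f := fun x => e2pi (-θ) * f x
  left_inv f := by
    funext x; dsimp; rw [← mul_assoc, e2pi_neg_mul, one_mul]
  right_inv f := by
    funext x; dsimp
    rw [← mul_assoc, mul_comm (e2pi θ), e2pi_neg_mul, one_mul]

/-- The time–frequency group `G = ⟨T_k, M_l : k ∈ ℤ^d, l ∈ Bℤ^d⟩`. -/
def TFGroup {d : ℕ} (B : Matrix (Fin d) (Fin d) ℝ) :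
    Subgroup (Equiv.Perm ((Fin d → ℝ) → ℂ)) :=
  Subgroup.closure
    ({g | ∃ k : Fin d → ℤ, g = Tr (fun i => (k i : ℝ))} ∪
     {g | ∃ z : Fin d → ℤ, g = Mo (B.mulVec (fun i => (z i : ℝ)))})


/-!
Every element of `G` can be written as `Sc θ * Tr k * Mo l` with `k ∈ ℤ^d`, `l ∈ Bℤ^d`, and the
commutator of two such elements is the scalar `Sc (⟨l₁, k₂⟩ - ⟨l₂, k₁⟩)`. For `k ∈ ℤ^d` and
`l ∈ Bℤ^d` the pairing `⟨l, k⟩` is an integer combination of entries of `B`, hence lies in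
`(1/m)ℤ`, so `[G,G]` sits inside the cyclic group generated by `Sc (1/m)`, whose `m`-th power
is `1`. A non-integer entry `B i j` yields the nontrivial commutator
`⁅T_{e_i}, M_{B e_j}⁆ = Sc (-B i j)`.
-/

open scoped commutatorElement Matrix

namespace TimeFrequency

variable {d : ℕ}

lemma dotR_eq_dotProduct (a b : Fin d → ℝ) : dotR a b = a ⬝ᵥ b := rfl

lemma e2pi_eq_one_iff (θ : ℝ) : e2pi θ = 1 ↔ ∃ n : ℤ, θ = n := by
  have h2πI : 2 * (Real.pi : ℂ) * Complex.I ≠ 0 := by simp [Real.pi_ne_zero]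
  rw [e2pi, Complex.exp_eq_one_iff]
  refine exists_congr fun n => ?_
  rw [mul_comm (n : ℂ), mul_right_inj' h2πI]
  exact_mod_cast Iff.rfl

lemma Sc_mul (a b : ℝ) : Sc (d := d) a * Sc b = Sc (a + b) := by
  ext f x
  simp only [Equiv.Perm.mul_apply, Sc, Equiv.coe_fn_mk, e2pi_add, mul_assoc]

lemma Sc_zero : Sc (d := d) 0 = 1 := by
  ext f x
  simp [Sc, e2pi_zero]

lemma Sc_zsmul (n : ℤ) (θ : ℝ) : Sc (d := d) (n • θ) = Sc θ ^ n :=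
  let scHom : Multiplicative ℝ →* Equiv.Perm ((Fin d → ℝ) → ℂ) :=
    { toFun θ := Sc θ.toAdd
      map_one' := Sc_zero
      map_mul' a b := (Sc_mul a.toAdd b.toAdd).symm }
  scHom.map_zpow (.ofAdd θ) n

lemma Sc_eq_one_iff (θ : ℝ) : Sc (d := d) θ = 1 ↔ ∃ n : ℤ, θ = n := by
  rw [← e2pi_eq_one_iff]
  constructor
  · intro h
    simpa [Sc] using congrFun (congrArg (· (fun _ => 1)) h) 0
  · intro h
    ext f x
    simp [Sc, h]

lemma Tr_zero : Tr (0 : Fin d → ℝ) = 1 := by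
  ext f x
  simp [Tr]

lemma Mo_zero : Mo (0 : Fin d → ℝ) = 1 := by
  ext f x
  simp [Mo, dotR, e2pi_zero]

lemma commutatorElement_Tr_Mo (k l : Fin d → ℝ) : ⁅Tr k, Mo l⁆ = Sc (-(dotR l k)) := by
  have h : Tr k * Mo l = Sc (-(dotR l k)) * (Mo l * Tr k) := by
    ext f x
    simp only [Equiv.Perm.mul_apply, Sc, Tr, Mo, Equiv.coe_fn_mk, ← mul_assoc, ← e2pi_add,
      dotR_eq_dotProduct, dotProduct_sub]
    ring_nf
  rw [commutatorElement_def, h]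
  group

lemma Sc_Tr_Mo_mul (θ₁ θ₂ : ℝ) (k₁ k₂ l₁ l₂ : Fin d → ℝ) :
    Sc θ₁ * Tr k₁ * Mo l₁ * (Sc θ₂ * Tr k₂ * Mo l₂)
      = Sc (θ₁ + θ₂ + dotR l₁ k₂) * Tr (k₁ + k₂) * Mo (l₁ + l₂) := by
  ext f x
  simp only [Equiv.Perm.mul_apply, Sc, Tr, Mo, Equiv.coe_fn_mk, ← mul_assoc, ← e2pi_add,
    dotR_eq_dotProduct, dotProduct_sub, add_dotProduct, dotProduct_add, sub_sub]
  ring_nf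

lemma Sc_Tr_Mo_inv (θ : ℝ) (k l : Fin d → ℝ) :
    (Sc θ * Tr k * Mo l)⁻¹ = Sc (-θ + dotR l k) * Tr (-k) * Mo (-l) := by
  refine inv_eq_of_mul_eq_one_right ?_
  rw [Sc_Tr_Mo_mul, dotR_eq_dotProduct, dotR_eq_dotProduct, dotProduct_neg]
  simp [Sc_zero, Tr_zero, Mo_zero]

lemma commutatorElement_Sc_Tr_Mo (θ₁ θ₂ : ℝ) (k₁ k₂ l₁ l₂ : Fin d → ℝ) :
    ⁅Sc θ₁ * Tr k₁ * Mo l₁, Sc θ₂ * Tr k₂ * Mo l₂⁆ = Sc (dotR l₁ k₂ - dotR l₂ k₁) := by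
  set x := Sc θ₁ * Tr k₁ * Mo l₁
  set y := Sc θ₂ * Tr k₂ * Mo l₂
  have h : x * y = Sc (dotR l₁ k₂ - dotR l₂ k₁) * (y * x) := by
    rw [Sc_Tr_Mo_mul, Sc_Tr_Mo_mul, ← mul_assoc, ← mul_assoc, Sc_mul, add_comm k₂, add_comm l₂]
    congr 3
    ring
  rw [commutatorElement_def, h]
  group

/-- A Heisenberg-type group: by `Sc_Tr_Mo_mul`, `⟨l, k⟩` is the cocycle of the product,
so `hpair` is exactly what closes the set under multiplication. -/
def heisenbergSubgroup (K L : AddSubgroup (Fin d → ℝ)) (Θ : AddSubgroup ℝ)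
    (hpair : ∀ l ∈ L, ∀ k ∈ K, dotR l k ∈ Θ) : Subgroup (Equiv.Perm ((Fin d → ℝ) → ℂ)) where
  carrier := {g | ∃ θ ∈ Θ, ∃ k ∈ K, ∃ l ∈ L, g = Sc θ * Tr k * Mo l}
  one_mem' := ⟨0, zero_mem Θ, 0, zero_mem K, 0, zero_mem L, by simp [Sc_zero, Tr_zero, Mo_zero]⟩
  mul_mem' := by
    rintro _ _ ⟨θ₁, hθ₁, k₁, hk₁, l₁, hl₁, rfl⟩ ⟨θ₂, hθ₂, k₂, hk₂, l₂, hl₂, rfl⟩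
    exact ⟨_, add_mem (add_mem hθ₁ hθ₂) (hpair l₁ hl₁ k₂ hk₂), _, add_mem hk₁ hk₂,
      _, add_mem hl₁ hl₂, Sc_Tr_Mo_mul ..⟩
  inv_mem' := by
    rintro _ ⟨θ, hθ, k, hk, l, hl, rfl⟩
    exact ⟨_, add_mem (neg_mem hθ) (hpair l hl k hk), _, neg_mem hk, _, neg_mem hl,
      Sc_Tr_Mo_inv ..⟩

lemma exists_commutatorElement_eq_Sc {K L : AddSubgroup (Fin d → ℝ)} {Θ : AddSubgroup ℝ}
    {hpair : ∀ l ∈ L, ∀ k ∈ K, dotR l k ∈ Θ} {g h : Equiv.Perm ((Fin d → ℝ) → ℂ)}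
    (hg : g ∈ heisenbergSubgroup K L Θ hpair) (hh : h ∈ heisenbergSubgroup K L Θ hpair) :
    ∃ θ ∈ Θ, ⁅g, h⁆ = Sc θ := by
  obtain ⟨θ₁, -, k₁, hk₁, l₁, hl₁, rfl⟩ := hg
  obtain ⟨θ₂, -, k₂, hk₂, l₂, hl₂, rfl⟩ := hh
  exact ⟨_, sub_mem (hpair l₁ hl₁ k₂ hk₂) (hpair l₂ hl₂ k₁ hk₁), commutatorElement_Sc_Tr_Mo ..⟩

variable (d) in
def intLattice : AddSubgroup (Fin d → ℝ) :=
  (AddMonoidHom.compLeft (Int.castAddHom ℝ) (Fin d)).range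

lemma dotR_mulVec_mem_of_mem {B : Matrix (Fin d) (Fin d) ℝ} {Θ : AddSubgroup ℝ}
    (hB : ∀ i j, B i j ∈ Θ) {l k : Fin d → ℝ} (hl : l ∈ (intLattice d).map B.mulVecLin)
    (hk : k ∈ intLattice d) : dotR l k ∈ Θ := by
  obtain ⟨_, ⟨z, rfl⟩, rfl⟩ := hl
  obtain ⟨k, rfl⟩ := hk
  change dotR (B *ᵥ fun i => (z i : ℝ)) (fun i => (k i : ℝ)) ∈ Θ
  simp only [dotR, Matrix.mulVec, dotProduct, Finset.sum_mul]
  refine sum_mem fun i _ => sum_mem fun j _ => ?_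
  convert zsmul_mem (hB i j) (z j * k i) using 1
  simp [zsmul_eq_mul]
  ring

lemma TFGroup_le_heisenbergSubgroup {B : Matrix (Fin d) (Fin d) ℝ} {Θ : AddSubgroup ℝ}
    (hB : ∀ i j, B i j ∈ Θ) :
    TFGroup B ≤ heisenbergSubgroup (intLattice d) ((intLattice d).map B.mulVecLin) Θ
      (fun _ hl _ hk => dotR_mulVec_mem_of_mem hB hl hk) := by
  rw [TFGroup, Subgroup.closure_le]
  rintro g (⟨k, rfl⟩ | ⟨z, rfl⟩)
  · exact ⟨0, zero_mem Θ, fun i => (k i : ℝ), ⟨k, rfl⟩, 0, zero_mem _, by simp [Sc_zero, Mo_zero]⟩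
  · exact ⟨0, zero_mem Θ, 0, zero_mem _, B *ᵥ fun i => (z i : ℝ), ⟨_, ⟨z, rfl⟩, rfl⟩,
      by simp [Sc_zero, Tr_zero]⟩

theorem commutator_TFGroup_le_zpowers {B : Matrix (Fin d) (Fin d) ℝ} {c : ℝ}
    (hB : ∀ i j, B i j ∈ AddSubgroup.zmultiples c) :
    ⁅TFGroup B, TFGroup B⁆ ≤ Subgroup.zpowers (Sc c) := by
  rw [Subgroup.commutator_le]
  intro g hg h hh
  obtain ⟨_, ⟨n, rfl⟩, hgh⟩ := exists_commutatorElement_eq_Sc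
    (TFGroup_le_heisenbergSubgroup hB hg) (TFGroup_le_heisenbergSubgroup hB hh)
  rw [hgh, Sc_zsmul]
  exact zpow_mem (Subgroup.mem_zpowers _) n

theorem commutator_TFGroup_ne_bot {B : Matrix (Fin d) (Fin d) ℝ} {i j : Fin d}
    (hij : ∀ n : ℤ, B i j ≠ n) : ⁅TFGroup B, TFGroup B⁆ ≠ ⊥ := by
  have hT : Tr (Pi.single i 1) ∈ TFGroup B :=
    Subgroup.subset_closure (Or.inl ⟨Pi.single i 1, by congr 1; ext; simp [Pi.single_apply]⟩)
  have hM : Mo (B.col j) ∈ TFGroup B :=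
    Subgroup.subset_closure (Or.inr ⟨Pi.single j 1, by
      rw [← Matrix.mulVec_single_one]; congr 2; ext; simp [Pi.single_apply]⟩)
  have hpair : dotR (B.col j) (Pi.single i 1) = B i j := by
    simp [dotR_eq_dotProduct]
  intro hbot
  have := Subgroup.commutator_mem_commutator hT hM
  rw [hbot, Subgroup.mem_bot, commutatorElement_Tr_Mo, hpair, Sc_eq_one_iff] at this
  obtain ⟨n, hn⟩ := this
  exact hij (-n) (by push_cast; linarith)

end TimeFrequency

lemma Rat.cast_mem_zmultiples_inv {q : ℚ} {m : ℕ} (hm : m ≠ 0) (h : q.den ∣ m) :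
    (q : ℝ) ∈ AddSubgroup.zmultiples ((m : ℝ)⁻¹) := by
  obtain ⟨c, rfl⟩ := h
  refine AddSubgroup.mem_zmultiples_iff.mpr ⟨q.num * c, ?_⟩
  have hc : (c : ℝ) ≠ 0 := by exact_mod_cast right_ne_zero_of_mul hm
  rw [zsmul_eq_mul, Rat.cast_def]
  push_cast
  field_simp

open TimeFrequency in
theorem stmt2_general {d : ℕ} (B : Matrix (Fin d) (Fin d) ℚ)
    (hBnotInt : ¬ ∀ i j, (B i j).den = 1)
    (m : ℕ) (hm : m = (Finset.univ : Finset ((Fin d) × (Fin d))).lcm (fun p => (B p.1 p.2).den)) :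
    ⁅TFGroup (B.map (Rat.cast : ℚ → ℝ)), TFGroup (B.map (Rat.cast : ℚ → ℝ))⁆ ≠ ⊥ ∧
    Finite ↥⁅TFGroup (B.map (Rat.cast : ℚ → ℝ)), TFGroup (B.map (Rat.cast : ℚ → ℝ))⁆ ∧
    IsCyclic ↥⁅TFGroup (B.map (Rat.cast : ℚ → ℝ)), TFGroup (B.map (Rat.cast : ℚ → ℝ))⁆ ∧
    ∀ g ∈ ⁅TFGroup (B.map (Rat.cast : ℚ → ℝ)), TFGroup (B.map (Rat.cast : ℚ → ℝ))⁆,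
      g ^ m = 1 := by
  have hm0 : m ≠ 0 := by simp [hm, Finset.lcm_eq_zero_iff]
  have hden (i j : Fin d) : (B i j).den ∣ m := hm ▸ Finset.dvd_lcm (Finset.mem_univ (i, j))
  have hle := commutator_TFGroup_le_zpowers (B := B.map (Rat.cast : ℚ → ℝ))
    fun i j => Rat.cast_mem_zmultiples_inv hm0 (hden i j)
  have hord : Sc (d := d) (m : ℝ)⁻¹ ^ m = 1 := by
    rw [← zpow_natCast, ← Sc_zsmul, natCast_zsmul, nsmul_eq_mul, mul_inv_cancel₀ (by simpa),
      Sc_eq_one_iff]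
    exact ⟨1, by simp⟩
  have hfin : IsOfFinOrder (Sc (d := d) (m : ℝ)⁻¹) :=
    isOfFinOrder_iff_pow_eq_one.mpr ⟨m, Nat.pos_of_ne_zero hm0, hord⟩
  obtain ⟨i, j, hij⟩ : ∃ i j, (B i j).den ≠ 1 := by simpa using hBnotInt
  refine ⟨commutator_TFGroup_ne_bot (i := i) (j := j) fun n hn => hij ?_,
    (hfin.finite_zpowers.subset hle).to_subtype, Subgroup.isCyclic_of_le hle, fun g hg => ?_⟩
  · rw [Matrix.map_apply] at hn
    rw [show B i j = n by exact_mod_cast hn, Rat.den_intCast]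
  · obtain ⟨n, rfl⟩ := Subgroup.mem_zpowers_iff.mp (hle hg)
    rw [← zpow_natCast, ← zpow_mul, mul_comm, zpow_mul, zpow_natCast, hord, one_zpow]

/-- If `B` is an invertible rational matrix which is not an integer matrix,
then the commutator subgroup `[G,G]` of the time–frequency group
`G = ⟨T_k, M_l : k ∈ ℤ^d, l ∈ Bℤ^d⟩` is a nontrivial finite cyclic group, and with `m` the
least common multiple of the denominators of the entries of `B`, every element of `[G,G]`
has order dividing `m` (i.e. `[G,G]` is contained in the `m`-th roots of unity). -/
theorem stmt2 {d : ℕ} (B : Matrix (Fin d) (Fin d) ℚ) (hB : IsUnit B.det)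
    (hBnotInt : ¬ ∀ i j, (B i j).den = 1)
    (m : ℕ) (hm : m = (Finset.univ : Finset ((Fin d) × (Fin d))).lcm (fun p => (B p.1 p.2).den)) :
    ⁅TFGroup (B.map (Rat.cast : ℚ → ℝ)), TFGroup (B.map (Rat.cast : ℚ → ℝ))⁆ ≠ ⊥ ∧
    Finite ↥⁅TFGroup (B.map (Rat.cast : ℚ → ℝ)), TFGroup (B.map (Rat.cast : ℚ → ℝ))⁆ ∧
    IsCyclic ↥⁅TFGroup (B.map (Rat.cast : ℚ → ℝ)), TFGroup (B.map (Rat.cast : ℚ → ℝ))⁆ ∧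
    ∀ g ∈ ⁅TFGroup (B.map (Rat.cast : ℚ → ℝ)), TFGroup (B.map (Rat.cast : ℚ → ℝ))⁆,
      g ^ m = 1 :=
  stmt2_general B hBnotInt m hm
end
end

section
/- If B ∈ GL(d,ℝ) has at least one irrational entry (i.e. B ∉ GL(d,ℚ)), then the commutator subgroup [G,G] of G = ⟨T_k, M_l : k ∈ ℤ^d, l ∈ Bℤ^d⟩ is an infinite subgroup of the circle; equivalently, the set {e^{-2πi⟨l,k⟩} : k ∈ ℤ^d, l ∈ Bℤ^d} generates an infinite (dense) subgroup of 𝕋. -/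
noncomputable section

open Complex

/-! If `B i j` is irrational, the commutator of `T_{e_i}` and `M_{B e_j}` is the scalar
`e^{-2πi B i j}`, which has infinite order; it lies in `[G,G]` and is one of the generating
scalars. -/

open scoped commutatorElement

lemma dotR_eq_dotProduct {d : ℕ} (a b : Fin d → ℝ) : dotR a b = a ⬝ᵥ b := rfl

lemma dotR_sub_right {d : ℕ} (l x k : Fin d → ℝ) : dotR l (x - k) = dotR l x - dotR l k := by
  simp only [dotR_eq_dotProduct, dotProduct_sub]

lemma e2pi_eq_one_iff {t : ℝ} : e2pi t = 1 ↔ ∃ m : ℤ, t = m := by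
  have h2piI : (2 * Real.pi * Complex.I : ℂ) ≠ 0 := by simp [Real.pi_ne_zero]
  rw [e2pi, Complex.exp_eq_one_iff]
  refine exists_congr fun m => ?_
  rw [mul_comm (m : ℂ), mul_right_inj' h2piI, ← Complex.ofReal_intCast, Complex.ofReal_inj]

section Scalar

variable {d : ℕ}

lemma Sc_add (s t : ℝ) : (Sc (s + t) : Equiv.Perm ((Fin d → ℝ) → ℂ)) = Sc s * Sc t := by
  ext f x
  simp [Sc, e2pi_add, mul_assoc]

lemma Sc_zero : (Sc 0 : Equiv.Perm ((Fin d → ℝ) → ℂ)) = 1 := by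
  ext f x
  simp [Sc, e2pi_zero]

lemma Sc_pow (t : ℝ) (n : ℕ) : (Sc t : Equiv.Perm ((Fin d → ℝ) → ℂ)) ^ n = Sc (n * t) := by
  induction n with
  | zero => simp [Sc_zero]
  | succ n ih =>
    rw [pow_succ, ih, ← Sc_add]
    push_cast
    ring_nf

lemma Sc_eq_one_iff {t : ℝ} : (Sc t : Equiv.Perm ((Fin d → ℝ) → ℂ)) = 1 ↔ ∃ m : ℤ, t = m := by
  rw [← e2pi_eq_one_iff]
  constructor
  · intro h
    simpa [Sc] using congrFun (congrArg (· fun _ => 1) h) 0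
  · intro h
    ext f x
    simp [Sc, h]

lemma not_isOfFinOrder_Sc {t : ℝ} (ht : Irrational t) :
    ¬IsOfFinOrder (Sc t : Equiv.Perm ((Fin d → ℝ) → ℂ)) := by
  intro hfin
  obtain ⟨n, hn, hpow⟩ := isOfFinOrder_iff_pow_eq_one.mp hfin
  obtain ⟨m, hm⟩ := Sc_eq_one_iff.mp ((Sc_pow t n).symm.trans hpow)
  exact (ht.natCast_mul hn.ne').ne_int m hm

end Scalar

lemma commutatorElement_Tr_Mo {d : ℕ} (k l : Fin d → ℝ) : ⁅Tr k, Mo l⁆ = Sc (-(dotR l k)) := by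
  ext f x
  simp only [commutatorElement_def, Equiv.Perm.mul_apply, Tr, Mo, Sc, Equiv.coe_fn_mk,
    Equiv.Perm.inv_def, Equiv.coe_fn_symm_mk, sub_add_cancel, ← mul_assoc, ← e2pi_add,
    dotR_sub_right]
  ring_nf

lemma dotR_mulVec_single {d : ℕ} (B : Matrix (Fin d) (Fin d) ℝ) (i j : Fin d) :
    dotR (B.mulVec fun j' => ((Pi.single j 1 : Fin d → ℤ) j' : ℝ))
      (fun i' => ((Pi.single i 1 : Fin d → ℤ) i' : ℝ)) = B i j := by
  have hcast (i : Fin d) : (fun i' => ((Pi.single i 1 : Fin d → ℤ) i' : ℝ)) = Pi.single i 1 := by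
    ext i'
    simp [Pi.single_apply]
  rw [hcast, hcast, dotR_eq_dotProduct, Matrix.mulVec_single_one, dotProduct_single_one]
  rfl

lemma Subgroup.infinite_of_mem_of_not_isOfFinOrder {G : Type*} [Group G] {H : Subgroup G}
    {g : G} (hg : g ∈ H) (h : ¬IsOfFinOrder g) : Infinite H := by
  rw [← not_finite_iff_infinite]
  intro
  exact h (Submonoid.isOfFinOrder_coe.mpr (isOfFinOrder_of_finite (⟨g, hg⟩ : H)))

theorem stmt3_general {d : ℕ} (B : Matrix (Fin d) (Fin d) ℝ)
    (hBirr : ¬ ∀ i j, ∃ q : ℚ, B i j = (q : ℝ)) :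
    Infinite ↥⁅TFGroup B, TFGroup B⁆ ∧
    Infinite ↥(Subgroup.closure {g : Equiv.Perm ((Fin d → ℝ) → ℂ) | ∃ k z : Fin d → ℤ,
      g = Sc (-(dotR (B.mulVec (fun i => (z i : ℝ))) (fun i => (k i : ℝ))))}) := by
  push Not at hBirr
  obtain ⟨i, j, hirr⟩ := hBirr
  have hα : Irrational (B i j) := fun ⟨q, hq⟩ => hirr q hq.symm
  have hinf : ¬IsOfFinOrder (Sc (-(B i j)) : Equiv.Perm ((Fin d → ℝ) → ℂ)) :=
    not_isOfFinOrder_Sc hα.neg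
  rw [← dotR_mulVec_single B i j] at hinf
  refine ⟨Subgroup.infinite_of_mem_of_not_isOfFinOrder ?_ hinf,
    Subgroup.infinite_of_mem_of_not_isOfFinOrder (Subgroup.subset_closure ⟨_, _, rfl⟩) hinf⟩
  rw [← commutatorElement_Tr_Mo]
  exact Subgroup.commutator_mem_commutator (Subgroup.subset_closure (.inl ⟨_, rfl⟩))
    (Subgroup.subset_closure (.inr ⟨_, rfl⟩))

/-- If `B ∈ GL(d,ℝ)` has at least one irrational entry (`B ∉ GL(d,ℚ)`),
then the commutator subgroup `[G,G]` of `G = ⟨T_k, M_l : k ∈ ℤ^d, l ∈ Bℤ^d⟩` is infinite;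
equivalently, the scalars `e^{-2πi⟨l,k⟩}` (`k ∈ ℤ^d`, `l ∈ Bℤ^d`) generate an infinite
subgroup of the circle. -/
theorem stmt3 {d : ℕ} (B : Matrix (Fin d) (Fin d) ℝ) (hB : IsUnit B.det)
    (hBirr : ¬ ∀ i j, ∃ q : ℚ, B i j = (q : ℝ)) :
    Infinite ↥⁅TFGroup B, TFGroup B⁆ ∧
    Infinite ↥(Subgroup.closure {g : Equiv.Perm ((Fin d → ℝ) → ℂ) | ∃ k z : Fin d → ℤ,
      g = Sc (-(dotR (B.mulVec (fun i => (z i : ℝ))) (fun i => (k i : ℝ))))}) :=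
  stmt3_general B hBirr
end
end
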